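/- arXiv:2403.07643 — 3 statements merged into one kernel-verified Lean document; each statement's English description precedes it below -/
import Mathlib

section
/- Let s ≥ 0 and L > 0. Define a sequence (x_n) by x_0 = 0, x_1 = L, and x_{n+1} = x_n + L·x_n^{-s} for n ≥ 1. Then the sequence is strictly increasing, tends to infinity, and x_n / ((s+1)·L·n)^{1/(s+1)} → 1 as n → ∞. -/
/-!
The sequence increases, and a finite limit would be a fixed point of `u ↦ u + L u ^ (-s)`, which
has none on `(0, ∞)`; so `x n → ∞`. For `y n = x n ^ (s + 1)` the increment `y (n + 1) - y n`
is a difference quotient of `t ↦ (1 + t) ^ (s + 1)` at `0`, so it tends to `(s + 1) L`. By Cesàro,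
`y n / n → (s + 1) L`, and taking `(s + 1)`-th roots gives the asymptotics.
-/

open Filter Topology Set

theorem Monotone.tendsto_atTop_of_recurrence {x : ℕ → ℝ} {f : ℝ → ℝ} (hx : Monotone x)
    (hrec : ∀ᶠ n in atTop, x (n + 1) = f (x n))
    (hf : ∀ l ∈ upperBounds (range x), ContinuousAt f l ∧ f l ≠ l) :
    Tendsto x atTop atTop := by
  refine (tendsto_atTop_of_monotone hx).resolve_right fun ⟨l, hl⟩ => ?_
  have hbound : l ∈ upperBounds (range x) := by
    rintro _ ⟨n, rfl⟩
    exact hx.ge_of_tendsto hl n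
  obtain ⟨hcont, hne⟩ := hf l hbound
  have hshift : Tendsto (fun n => f (x n)) atTop (𝓝 l) :=
    (hl.comp (tendsto_add_atTop_nat 1)).congr' (hrec.mono fun n hn => hn)
  exact hne (tendsto_nhds_unique (hcont.tendsto.comp hl) hshift)

theorem tendsto_div_natCast_of_tendsto_sub {y : ℕ → ℝ} {a : ℝ}
    (h : Tendsto (fun n => y (n + 1) - y n) atTop (𝓝 a)) :
    Tendsto (fun n : ℕ => y n / n) atTop (𝓝 a) := by
  have hsum := (tendsto_const_div_atTop_nhds_zero_nat (y 0)).add h.cesaro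
  rw [zero_add] at hsum
  refine hsum.congr' (eventually_ne_atTop 0 |>.mono fun n hn => ?_)
  rw [Finset.sum_range_sub (f := y)]
  field_simp
  ring

theorem tendsto_one_add_rpow_sub_one_div_nhdsNE (p : ℝ) :
    Tendsto (fun t : ℝ => ((1 + t) ^ p - 1) / t) (𝓝[≠] 0) (𝓝 p) := by
  have hderiv : HasDerivAt (fun t : ℝ => (1 + t) ^ p) p 0 := by
    simpa using ((hasDerivAt_id (0 : ℝ)).const_add 1).rpow_const (p := p) (Or.inl (by norm_num))
  refine (hasDerivAt_iff_tendsto_slope.1 hderiv).congr fun t => ?_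
  simp [slope_def_field]

/-- With `t = L / u ^ (s + 1) → 0` the difference is `L ((1 + t) ^ (s + 1) - 1) / t`. -/
theorem tendsto_rpow_add_mul_rpow_neg_sub_rpow {s L : ℝ} (hs : 0 < s + 1) (hL : L ≠ 0) :
    Tendsto (fun u : ℝ => (u + L * u ^ (-s)) ^ (s + 1) - u ^ (s + 1)) atTop
      (𝓝 ((s + 1) * L)) := by
  set t : ℝ → ℝ := fun u => L / u ^ (s + 1)
  have ht0 : Tendsto t atTop (𝓝 0) := tendsto_const_nhds.div_atTop (tendsto_rpow_atTop hs)
  have ht : Tendsto t atTop (𝓝[≠] 0) := by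
    refine tendsto_nhdsWithin_iff.2 ⟨ht0, ?_⟩
    filter_upwards [eventually_gt_atTop 0] with u hu
    exact div_ne_zero hL (Real.rpow_pos_of_pos hu _).ne'
  have hlim := ((tendsto_one_add_rpow_sub_one_div_nhdsNE (s + 1)).comp ht).const_mul L
  rw [mul_comm] at hlim
  refine hlim.congr' ?_
  filter_upwards [eventually_gt_atTop 0, ht0.eventually (eventually_gt_nhds neg_one_lt_zero)]
    with u hu htu
  have hpow : 0 < u ^ (s + 1) := Real.rpow_pos_of_pos hu _
  have hL_eq : L = t u * u ^ (s + 1) := (div_mul_cancel₀ _ hpow.ne').symm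
  have hfactor : u + L * u ^ (-s) = u * (1 + t u) := by
    rw [show -s = 1 - (s + 1) by ring, Real.rpow_sub hu, Real.rpow_one, hL_eq]
    field_simp
  have htu0 : t u ≠ 0 := div_ne_zero hL hpow.ne'
  simp only [Function.comp_apply]
  rw [hfactor, Real.mul_rpow hu.le (by linarith), hL_eq]
  field_simp

theorem tendsto_div_rpow_of_tendsto_rpow_div {x : ℕ → ℝ} {p c : ℝ} (hp : p ≠ 0) (hc : 0 < c)
    (hx : ∀ᶠ n in atTop, 0 ≤ x n) (h : Tendsto (fun n : ℕ => x n ^ p / n) atTop (𝓝 c)) :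
    Tendsto (fun n : ℕ => x n / (c * n) ^ (1 / p)) atTop (𝓝 1) := by
  have hratio : Tendsto (fun n : ℕ => x n ^ p / (c * n)) atTop (𝓝 1) := by
    simpa [div_mul_eq_div_div_swap, div_self hc.ne'] using h.div_const c
  have hroot := (Real.continuousAt_rpow_const 1 (1 / p) (Or.inl one_ne_zero)).tendsto.comp hratio
  rw [Real.one_rpow] at hroot
  refine hroot.congr' ?_
  filter_upwards [hx] with n hn
  rw [Function.comp_apply, Real.div_rpow (by positivity) (by positivity), ← Real.rpow_mul hn,
    mul_one_div_cancel hp, Real.rpow_one]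

/-- Let `s ≥ 0` and `L > 0`. The sequence defined by `x 0 = 0`, `x 1 = L`,
`x (n+1) = x n + L * (x n) ^ (-s)` for `n ≥ 1` is strictly increasing, tends to infinity, and
satisfies `x n / ((s+1) * L * n) ^ (1/(s+1)) → 1`. -/
theorem stmt0 (s L : ℝ) (hs : 0 ≤ s) (hL : 0 < L) (x : ℕ → ℝ)
    (h0 : x 0 = 0) (h1 : x 1 = L)
    (hrec : ∀ n : ℕ, 1 ≤ n → x (n + 1) = x n + L * (x n) ^ (-s)) :
    (∀ n : ℕ, x n < x (n + 1)) ∧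
    Tendsto x atTop atTop ∧
    Tendsto (fun n : ℕ => x n / ((s + 1) * L * (n : ℝ)) ^ (1 / (s + 1))) atTop (nhds 1) := by
  have hstep : ∀ u > 0, u < u + L * u ^ (-s) := fun u hu =>
    lt_add_of_pos_right u (mul_pos hL (Real.rpow_pos_of_pos hu _))
  have hpos : ∀ n, 1 ≤ n → 0 < x n := by
    refine Nat.le_induction (h1 ▸ hL) fun n hn hxn => ?_
    rw [hrec n hn]
    exact hxn.trans (hstep _ hxn)
  have hlt : ∀ n, x n < x (n + 1)
    | 0 => by rw [h0, h1]; exact hL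
    | n + 1 => by rw [hrec (n + 1) n.succ_pos]; exact hstep _ (hpos _ n.succ_pos)
  have hrec' : ∀ᶠ n in atTop, x (n + 1) = x n + L * x n ^ (-s) := eventually_atTop.2 ⟨1, hrec⟩
  have htop : Tendsto x atTop atTop := by
    refine (strictMono_nat_of_lt_succ hlt).monotone.tendsto_atTop_of_recurrence
      (f := fun u => u + L * u ^ (-s)) hrec' fun l hl => ?_
    have hl0 : 0 < l := (hpos 1 le_rfl).trans_le (hl ⟨1, rfl⟩)
    exact ⟨continuousAt_id.add (continuousAt_const.mul
      (Real.continuousAt_rpow_const _ _ (Or.inl hl0.ne'))), (hstep l hl0).ne'⟩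
  have hincr : Tendsto (fun n => x (n + 1) ^ (s + 1) - x n ^ (s + 1)) atTop (𝓝 ((s + 1) * L)) :=
    ((tendsto_rpow_add_mul_rpow_neg_sub_rpow (by linarith) hL.ne').comp htop).congr'
      (hrec'.mono fun n hn => by simp only [Function.comp_apply, hn])
  refine ⟨hlt, htop, tendsto_div_rpow_of_tendsto_rpow_div (by linarith) (by positivity) ?_
    (tendsto_div_natCast_of_tendsto_sub hincr)⟩
  exact eventually_atTop.2 ⟨1, fun n hn => (hpos n hn).le⟩
end

section
/- Let f be holomorphic on B_R ⊂ ℂ (0 < R < ∞) and set M(r) = max_{|z| = r} |f(z)|. Then for any 0 < r₁ < r₂ < r₃ < R, log(r₃/r₁)·log M(r₂) ≤ log(r₃/r₂)·log M(r₁) + log(r₂/r₁)·log M(r₃). -/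
/-!
The map `exp` sends the vertical strip `log r₁ ≤ re z ≤ log r₃` onto the closed annulus
`r₁ ≤ ‖w‖ ≤ r₃`, and `f ∘ exp` is bounded on it because the annulus is compact. Hadamard's
three-lines theorem for `f ∘ exp` bounds `‖f‖` on the circle of radius `r₂` by
`M r₁ ^ (1 - s) * M r₃ ^ s` with `s = log (r₂ / r₁) / log (r₃ / r₁)`; taking logarithms gives the
inequality. If some `M r` vanishes, `f` vanishes on a circle, hence on the disc it bounds (maximum
modulus) and on the whole ball (identity theorem), and both sides are `0` since `log 0 = 0`.
-/

open Metric Set Real Complex.HadamardThreeLines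

variable {E : Type*} [NormedAddCommGroup E]

theorem isGreatest_norm_image_sphere_eq_zero_iff {f : ℂ → E} {c : ℂ} {r m : ℝ}
    (hm : IsGreatest ((fun z => ‖f z‖) '' sphere c r) m) : m = 0 ↔ EqOn f 0 (sphere c r) := by
  refine ⟨fun h z hz => norm_le_zero_iff.1 (h ▸ hm.2 ⟨z, hz, rfl⟩), fun h => ?_⟩
  obtain ⟨z, hz, rfl⟩ := hm.1
  simp [h hz]

variable [NormedSpace ℂ E]

theorem eqOn_zero_of_eqOn_zero_sphere [CompleteSpace E] {f : ℂ → E} {R r : ℝ}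
    (hf : DifferentiableOn ℂ f (ball 0 R)) (hr : 0 < r) (hrR : r < R)
    (h : EqOn f 0 (sphere 0 r)) : EqOn f 0 (ball 0 R) := by
  have hball : EqOn f 0 (ball 0 r) :=
    Complex.eqOn_of_eqOn_frontier isBounded_ball
      (hf.diffContOnCl_ball (closedBall_subset_ball hrR)) diffContOnCl_const
      (by rwa [frontier_ball 0 hr.ne'])
  exact (hf.analyticOnNhd isOpen_ball).eqOn_zero_of_preconnected_of_eventuallyEq_zero
    (convex_ball 0 R).isPreconnected (mem_ball_self (hr.trans hrR))
    (Filter.eventuallyEq_of_mem (ball_mem_nhds 0 hr) hball)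

theorem pos_of_isGreatest_norm_image_sphere [CompleteSpace E] {f : ℂ → E} {R r m : ℝ}
    (hf : DifferentiableOn ℂ f (ball 0 R)) (hr : 0 < r) (hrR : r < R)
    (hf0 : ¬EqOn f 0 (ball 0 R)) (hm : IsGreatest ((fun z => ‖f z‖) '' sphere 0 r) m) :
    0 < m := by
  obtain ⟨z, -, rfl⟩ := hm.1
  refine (norm_nonneg _).lt_of_ne fun h => hf0 ?_
  exact eqOn_zero_of_eqOn_zero_sphere hf hr hrR
    ((isGreatest_norm_image_sphere_eq_zero_iff hm).1 h.symm)

theorem exp_preimage_norm_preimage_Icc {r₁ r₃ : ℝ} (h₁ : 0 < r₁) (h₁₃ : r₁ ≤ r₃) :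
    Complex.exp ⁻¹' (norm ⁻¹' Icc r₁ r₃) =
      verticalClosedStrip (log r₁) (log r₃) := by
  ext z
  simp only [mem_preimage, Complex.norm_exp, mem_Icc, verticalClosedStrip,
    ← log_le_iff_le_exp h₁, ← le_log_iff_exp_le (h₁.trans_le h₁₃)]

theorem norm_le_rpow_mul_rpow_of_mem_sphere {f : ℂ → E} {r₁ r₂ r₃ a b : ℝ}
    (h₁ : 0 < r₁) (h₁₂ : r₁ ≤ r₂) (h₂₃ : r₂ ≤ r₃) (h₁₃ : r₁ < r₃)
    (hf : DifferentiableOn ℂ f (norm ⁻¹' Icc r₁ r₃))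
    (ha : ∀ z ∈ sphere (0 : ℂ) r₁, ‖f z‖ ≤ a) (hb : ∀ z ∈ sphere (0 : ℂ) r₃, ‖f z‖ ≤ b)
    {w : ℂ} (hw : w ∈ sphere (0 : ℂ) r₂) :
    ‖f w‖ ≤ a ^ (log (r₃ / r₂) / log (r₃ / r₁)) * b ^ (log (r₂ / r₁) / log (r₃ / r₁)) := by
  have h₂ : 0 < r₂ := h₁.trans_le h₁₂
  have h₃ : 0 < r₃ := h₁.trans h₁₃
  have hstrip := exp_preimage_norm_preimage_Icc h₁ h₁₃.le
  have hg : DifferentiableOn ℂ (f ∘ Complex.exp) (verticalClosedStrip (log r₁) (log r₃)) :=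
    hstrip ▸ hf.comp Complex.differentiable_exp.differentiableOn (mapsTo_preimage _ _)
  have hd : DiffContOnCl ℂ (f ∘ Complex.exp) (verticalStrip (log r₁) (log r₃)) :=
    (hg.mono (closure_minimal (preimage_mono Ioo_subset_Icc_self)
      (isClosed_Icc.preimage Complex.continuous_re))).diffContOnCl
  have hB : BddAbove ((norm ∘ f ∘ Complex.exp) '' verticalClosedStrip (log r₁) (log r₃)) := by
    have hK : IsCompact (norm ⁻¹' Icc r₁ r₃ : Set ℂ) :=
      (isCompact_closedBall 0 r₃).of_isClosed_subset (isClosed_Icc.preimage continuous_norm)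
        fun z hz => mem_closedBall_zero_iff.2 hz.2
    refine (hK.image_of_continuousOn
      (continuous_norm.comp_continuousOn hf.continuousOn)).bddAbove.mono ?_
    rw [← hstrip]
    exact (image_comp (norm ∘ f) Complex.exp _).trans_subset
      (image_mono (image_preimage_subset _ _))
  have hedge : ∀ {r c : ℝ}, 0 < r → (∀ z ∈ sphere (0 : ℂ) r, ‖f z‖ ≤ c) →
      ∀ z ∈ Complex.re ⁻¹' {log r}, ‖(f ∘ Complex.exp) z‖ ≤ c := by
    intro r c hr hc z hz
    refine hc _ ?_
    rw [mem_sphere_zero_iff_norm, Complex.norm_exp, hz, exp_log hr]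
  set z : ℂ := log r₂ + Complex.arg w * Complex.I
  have hzre : z.re = log r₂ := by simp [z]
  have hz : Complex.exp z = w := by
    rw [Complex.exp_add, ← Complex.ofReal_exp, exp_log h₂, ← mem_sphere_zero_iff_norm.1 hw,
      Complex.norm_mul_exp_arg_mul_I]
  have hzmem : z ∈ verticalClosedStrip (log r₁) (log r₃) :=
    ⟨hzre ▸ log_le_log h₁ h₁₂, hzre ▸ log_le_log h₂ h₂₃⟩
  have key := norm_le_interp_of_mem_verticalClosedStrip' (log_lt_log h₁ h₁₃) hzmem hd hB
    (hedge h₁ ha) (hedge h₃ hb)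
  have hL : log r₃ - log r₁ ≠ 0 := (sub_pos.2 (log_lt_log h₁ h₁₃)).ne'
  have hexp : 1 - (log r₂ - log r₁) / (log r₃ - log r₁) =
      (log r₃ - log r₂) / (log r₃ - log r₁) := by
    field_simp
    ring
  rwa [Function.comp_apply, hz, hzre, hexp, ← log_div h₃.ne' h₂.ne', ← log_div h₂.ne' h₁.ne',
    ← log_div h₃.ne' h₁.ne'] at key

theorem mul_log_le_of_le_rpow_mul_rpow {x y z α β : ℝ} (hx : 0 < x) (hy : 0 < y) (hz : 0 < z)
    (hαβ : 0 < α + β) (h : y ≤ x ^ (α / (α + β)) * z ^ (β / (α + β))) :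
    (α + β) * log y ≤ α * log x + β * log z := by
  have hlog := log_le_log hy h
  rw [log_mul (rpow_pos_of_pos hx _).ne' (rpow_pos_of_pos hz _).ne', log_rpow hx, log_rpow hz]
    at hlog
  calc (α + β) * log y ≤ (α + β) * (α / (α + β) * log x + β / (α + β) * log z) :=
        mul_le_mul_of_nonneg_left hlog hαβ.le
    _ = α * log x + β * log z := by field_simp

theorem stmt7_general (R : ℝ) (f : ℂ → ℂ) (hf : DifferentiableOn ℂ f (ball (0 : ℂ) R))
    (r₁ r₂ r₃ : ℝ) (h₁ : 0 < r₁) (h₁₂ : r₁ < r₂) (h₂₃ : r₂ < r₃) (h₃R : r₃ < R)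
    (M : ℝ → ℝ) (hM : ∀ r ∈ Set.Ioo (0 : ℝ) R, IsGreatest ((fun z => ‖f z‖) '' sphere (0 : ℂ) r) (M r)) :
    Real.log (r₃ / r₁) * Real.log (M r₂) ≤
      Real.log (r₃ / r₂) * Real.log (M r₁) + Real.log (r₂ / r₁) * Real.log (M r₃) := by
  have h₁₃ : r₁ < r₃ := h₁₂.trans h₂₃
  have hIoo : ∀ r ∈ Icc r₁ r₃, r ∈ Ioo 0 R := fun r hr => ⟨h₁.trans_le hr.1, hr.2.trans_lt h₃R⟩
  have hr₁ : r₁ ∈ Icc r₁ r₃ := ⟨le_rfl, h₁₃.le⟩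
  have hr₂ : r₂ ∈ Icc r₁ r₃ := ⟨h₁₂.le, h₂₃.le⟩
  have hr₃ : r₃ ∈ Icc r₁ r₃ := ⟨h₁₃.le, le_rfl⟩
  by_cases hf0 : EqOn f 0 (ball 0 R)
  · have hM0 : ∀ r ∈ Icc r₁ r₃, M r = 0 := fun r hr =>
      (isGreatest_norm_image_sphere_eq_zero_iff (hM r (hIoo r hr))).2
        (hf0.mono (sphere_subset_closedBall.trans (closedBall_subset_ball (hIoo r hr).2)))
    simp [hM0 r₁ hr₁, hM0 r₂ hr₂, hM0 r₃ hr₃]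
  · have hpos : ∀ r ∈ Icc r₁ r₃, 0 < M r := fun r hr =>
      pos_of_isGreatest_norm_image_sphere hf (hIoo r hr).1 (hIoo r hr).2 hf0 (hM r (hIoo r hr))
    obtain ⟨w, hw, hMw⟩ := (hM r₂ (hIoo r₂ hr₂)).1
    have hthree := hMw.symm.trans_le <| norm_le_rpow_mul_rpow_of_mem_sphere h₁ h₁₂.le h₂₃.le h₁₃
      (hf.mono fun z hz => mem_ball_zero_iff.2 (hz.2.trans_lt h₃R))
      (fun z hz => (hM r₁ (hIoo r₁ hr₁)).2 ⟨z, hz, rfl⟩)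
      (fun z hz => (hM r₃ (hIoo r₃ hr₃)).2 ⟨z, hz, rfl⟩) hw
    have hlog_pos : 0 < log (r₃ / r₁) := log_pos ((one_lt_div h₁).2 h₁₃)
    have hsum : log (r₃ / r₂) + log (r₂ / r₁) = log (r₃ / r₁) := by
      have h₂ : 0 < r₂ := h₁.trans h₁₂
      have h₃ : 0 < r₃ := h₂.trans h₂₃
      rw [← log_mul (by positivity) (by positivity), div_mul_div_cancel₀ h₂.ne']
    rw [← hsum] at hthree hlog_pos ⊢
    exact mul_log_le_of_le_rpow_mul_rpow (hpos r₁ hr₁) (hpos r₂ hr₂) (hpos r₃ hr₃) hlog_pos hthree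

/-- Hadamard's three-circle theorem. Let `f` be holomorphic on `B_R ⊆ ℂ`
(`0 < R < ∞`) and `M r = max_{|z| = r} |f z|`. Then for `0 < r₁ < r₂ < r₃ < R`,
`log(r₃/r₁) · log M(r₂) ≤ log(r₃/r₂) · log M(r₁) + log(r₂/r₁) · log M(r₃)`. -/
theorem stmt7 (R : ℝ) (hR : 0 < R) (f : ℂ → ℂ) (hf : DifferentiableOn ℂ f (ball (0 : ℂ) R))
    (r₁ r₂ r₃ : ℝ) (h₁ : 0 < r₁) (h₁₂ : r₁ < r₂) (h₂₃ : r₂ < r₃) (h₃R : r₃ < R)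
    (M : ℝ → ℝ) (hM : ∀ r ∈ Set.Ioo (0 : ℝ) R, IsGreatest ((fun z => ‖f z‖) '' sphere (0 : ℂ) r) (M r)) :
    Real.log (r₃ / r₁) * Real.log (M r₂) ≤
      Real.log (r₃ / r₂) * Real.log (M r₁) + Real.log (r₂ / r₁) * Real.log (M r₃) :=
  stmt7_general R f hf r₁ r₂ r₃ h₁ h₁₂ h₂₃ h₃R M hM
end

section
/- Fix s ≥ 0 and τ ≥ 0. A measurable set Ω ⊂ ℝ is thick of type (ρ_s, τ) (i.e. there exist γ ∈ (0,1), L > 0 with |Ω ∩ [x − Lρ_s(x), x + Lρ_s(x)]| ≥ γ^{⟨x⟩^τ}·2Lρ_s(x) for all x ∈ ℝ, where ρ_s(x) = ⟨x⟩^{−s}) if and only if there exist γ' ∈ (0,1) and L' > 0 such that, with the sequence x_0 = 0, x_1 = L', x_{n+1} = x_n + L'·x_n^{−s} and intervals I_0 = [−L', L'], I_n = [x_n, x_{n+1}], I_{−n} = −I_n, one has |Ω ∩ I_n| ≥ γ'^{⟨x_{|n|}⟩^τ}·|I_n| for all n ∈ ℤ. -/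
/-!
Both conditions compare `Ω` with intervals of length comparable to `⟨x⟩^{-s}` around `x`. Since
`⟨·⟩` is `1`-Lipschitz, on a set of bounded diameter the weights `⟨x⟩^τ` and `⟨x⟩^{-s}` change by
bounded factors only, and these are absorbed by shrinking `γ`. The recurrence makes
`|Iₙ| = L' xₙ^{-s}` comparable to `⟨x⟩^{-s}` for every `x ∈ Iₙ`. Given thickness with `(γ, L)`,
take `L' = 2L`: the window centred at the midpoint of `Iₙ` lies in `Iₙ`. Conversely, for
`y ∈ [x_k, x_{k+1}]` the window around `y` contains `I_{k+1}` once `L` is large. Negative points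
and indices reduce to positive ones by reflecting `Ω`, which preserves Lebesgue measure.
-/

open MeasureTheory Set
open scoped ENNReal

/-- The Japanese bracket `⟨x⟩ = (1 + x²)^{1/2}`. -/
noncomputable def jbracket (x : ℝ) : ℝ := Real.sqrt (1 + x ^ 2)

/-- The intervals `I₀ = [-L, L]`, `Iₙ = [xₙ, x_{n+1}]` for `n > 0`, and `I₋ₙ = -Iₙ`, built from
the sequence `x`. -/
noncomputable def seqInterval (L : ℝ) (x : ℕ → ℝ) (n : ℤ) : Set ℝ :=
  if n = 0 then Icc (-L) L
  else if 0 < n then Icc (x n.toNat) (x (n.toNat + 1))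
  else Icc (-(x (n.natAbs + 1))) (-(x n.natAbs))

lemma one_le_jbracket (x : ℝ) : 1 ≤ jbracket x :=
  Real.one_le_sqrt.2 (le_add_of_nonneg_right (sq_nonneg x))

lemma jbracket_pos (x : ℝ) : 0 < jbracket x := zero_lt_one.trans_le (one_le_jbracket x)

lemma abs_le_jbracket (x : ℝ) : |x| ≤ jbracket x := by
  rw [jbracket, ← Real.sqrt_sq_eq_abs]
  exact Real.sqrt_le_sqrt (le_add_of_nonneg_left zero_le_one)

@[simp] lemma jbracket_zero : jbracket 0 = 1 := by simp [jbracket]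

@[simp] lemma jbracket_neg (x : ℝ) : jbracket (-x) = jbracket x := by simp [jbracket]

lemma jbracket_le_add_abs_sub (x y : ℝ) : jbracket x ≤ jbracket y + |x - y| := by
  have hy : jbracket y ^ 2 = 1 + y ^ 2 := Real.sq_sqrt (by positivity)
  have hyx : y * (x - y) ≤ jbracket y * |x - y| :=
    (le_abs_self _).trans (abs_mul y (x - y) ▸
      mul_le_mul_of_nonneg_right (abs_le_jbracket y) (abs_nonneg _))
  rw [jbracket, Real.sqrt_le_iff]
  refine ⟨add_nonneg (jbracket_pos y).le (abs_nonneg _), ?_⟩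
  nlinarith [sq_abs (x - y)]

lemma jbracket_le_mul_of_abs_sub_le {x y D : ℝ} (h : |x - y| ≤ D) :
    jbracket x ≤ (1 + D) * jbracket y := by
  have hD : D ≤ D * jbracket y :=
    le_mul_of_one_le_right ((abs_nonneg _).trans h) (one_le_jbracket y)
  linarith [jbracket_le_add_abs_sub x y]

lemma jbracket_le_mul_self {a₀ a : ℝ} (ha₀ : 0 < a₀) (ha : a₀ ≤ a) :
    jbracket a ≤ (1 + a₀⁻¹) * a := by
  have h := jbracket_le_add_abs_sub a 0
  rw [jbracket_zero, sub_zero, abs_of_pos (ha₀.trans_le ha)] at h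
  have : 1 ≤ a₀⁻¹ * a := by rwa [← div_eq_inv_mul, one_le_div ha₀]
  linarith

lemma jbracket_rpow_pos (x s : ℝ) : 0 < jbracket x ^ s := Real.rpow_pos_of_pos (jbracket_pos x) s

lemma jbracket_rpow_neg_le_one {s : ℝ} (hs : 0 ≤ s) (x : ℝ) : jbracket x ^ (-s) ≤ 1 :=
  Real.rpow_le_one_of_one_le_of_nonpos (one_le_jbracket x) (neg_nonpos.2 hs)

lemma rpow_neg_le_mul_rpow_neg {s a b C : ℝ} (hs : 0 ≤ s) (ha : 0 ≤ a) (hb : 0 < b)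
    (hC : 0 < C) (h : b ≤ C * a) : a ^ (-s) ≤ C ^ s * b ^ (-s) := by
  have h' : C ^ (-s) * a ^ (-s) ≤ b ^ (-s) := by
    rw [← Real.mul_rpow hC.le ha]
    exact Real.rpow_le_rpow_of_nonpos hb h (neg_nonpos.2 hs)
  calc a ^ (-s) = C ^ s * (C ^ (-s) * a ^ (-s)) := by
        rw [← mul_assoc, ← Real.rpow_add hC, add_neg_cancel, Real.rpow_zero, one_mul]
    _ ≤ C ^ s * b ^ (-s) := by gcongr

lemma jbracket_rpow_neg_le_mul {s x y D : ℝ} (hs : 0 ≤ s) (h : |x - y| ≤ D) :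
    jbracket x ^ (-s) ≤ (1 + D) ^ s * jbracket y ^ (-s) := by
  have hD : 0 ≤ D := (abs_nonneg _).trans h
  refine rpow_neg_le_mul_rpow_neg hs (jbracket_pos x).le (jbracket_pos y) (by positivity) ?_
  exact jbracket_le_mul_of_abs_sub_le (by rwa [abs_sub_comm])

lemma rpow_rpow_le_rpow_rpow {γ C a b τ : ℝ} (hγ₀ : 0 < γ) (hγ₁ : γ ≤ 1) (hτ : 0 ≤ τ)
    (ha : 0 ≤ a) (hb : 0 ≤ b) (hC : 0 ≤ C) (hab : a ≤ C * b) :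
    (γ ^ C ^ τ) ^ b ^ τ ≤ γ ^ a ^ τ := by
  rw [← Real.rpow_mul hγ₀.le, ← Real.mul_rpow hC hb]
  exact Real.rpow_le_rpow_of_exponent_ge hγ₀ hγ₁ (Real.rpow_le_rpow ha hab hτ)

lemma mul_rpow_mem_Ioo {γ c C τ : ℝ} (hγ : γ ∈ Ioo (0 : ℝ) 1) (hc₀ : 0 < c) (hc₁ : c ≤ 1)
    (hC : 0 < C) : c * γ ^ C ^ τ ∈ Ioo (0 : ℝ) 1 :=
  ⟨mul_pos hc₀ (Real.rpow_pos_of_pos hγ.1 _), mul_lt_one_of_nonneg_of_lt_one_right hc₁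
    (Real.rpow_nonneg hγ.1.le _) (Real.rpow_lt_one hγ.1.le hγ.2 (Real.rpow_pos_of_pos hC _))⟩

/-- Shrinking `γ` to `c γ ^ C ^ τ` absorbs both the constant `C` in `⟨x⟩ ≤ C ⟨y⟩` and a factor
`c ≤ 1` between lengths, because `⟨y⟩ ^ τ ≥ 1`. -/
lemma weight_mul_le {γ c C τ x y ℓ ℓ' : ℝ} (hγ₀ : 0 < γ) (hγ₁ : γ ≤ 1) (hτ : 0 ≤ τ)
    (hc₀ : 0 ≤ c) (hc₁ : c ≤ 1) (hC : 0 ≤ C) (hxy : jbracket x ≤ C * jbracket y)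
    (hℓ : 0 ≤ ℓ) (hcℓ : c * ℓ ≤ ℓ') :
    (c * γ ^ C ^ τ) ^ jbracket y ^ τ * ℓ ≤ γ ^ jbracket x ^ τ * ℓ' := by
  have hγC : 0 ≤ γ ^ C ^ τ := Real.rpow_nonneg hγ₀.le _
  have hw : 0 ≤ γ ^ jbracket x ^ τ := Real.rpow_nonneg hγ₀.le _
  calc (c * γ ^ C ^ τ) ^ jbracket y ^ τ * ℓ
      = c ^ jbracket y ^ τ * (γ ^ C ^ τ) ^ jbracket y ^ τ * ℓ := by
        rw [Real.mul_rpow hc₀ hγC]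
    _ ≤ c * γ ^ jbracket x ^ τ * ℓ := by
        gcongr
        · exact Real.rpow_le_self_of_le_one hc₀ hc₁ (Real.one_le_rpow (one_le_jbracket y) hτ)
        · exact rpow_rpow_le_rpow_rpow hγ₀ hγ₁ hτ (jbracket_pos x).le (jbracket_pos y).le hC hxy
    _ = γ ^ jbracket x ^ τ * (c * ℓ) := by ring
    _ ≤ γ ^ jbracket x ^ τ * ℓ' := by gcongr

def ThickAt (s τ γ L : ℝ) (Ω : Set ℝ) (y : ℝ) : Prop :=
  ENNReal.ofReal (γ ^ (jbracket y ^ τ) * (2 * L * jbracket y ^ (-s))) ≤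
    volume (Ω ∩ Icc (y - L * jbracket y ^ (-s)) (y + L * jbracket y ^ (-s)))

def HasDensity (δ : ℝ) (Ω I : Set ℝ) : Prop :=
  ENNReal.ofReal δ * volume I ≤ volume (Ω ∩ I)

lemma volume_neg_inter_neg (Ω A : Set ℝ) : volume (-Ω ∩ -A) = volume (Ω ∩ A) := by
  rw [← Set.inter_neg, Measure.measure_neg]

lemma thickAt_neg {s τ γ L y : ℝ} {Ω : Set ℝ} :
    ThickAt s τ γ L (-Ω) (-y) ↔ ThickAt s τ γ L Ω y := by
  have hW : Icc (-y - L * jbracket y ^ (-s)) (-y + L * jbracket y ^ (-s)) =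
      -Icc (y - L * jbracket y ^ (-s)) (y + L * jbracket y ^ (-s)) := by
    rw [Set.neg_Icc]; congr 1 <;> ring
  simp only [ThickAt, jbracket_neg, hW, volume_neg_inter_neg]

lemma hasDensity_neg {δ : ℝ} {Ω I : Set ℝ} : HasDensity δ Ω (-I) ↔ HasDensity δ (-Ω) I := by
  rw [HasDensity, HasDensity, ← volume_neg_inter_neg (-Ω), neg_neg, Measure.measure_neg]

lemma ofReal_mul_volume_Icc {δ : ℝ} (hδ : 0 ≤ δ) (a b : ℝ) :
    ENNReal.ofReal δ * volume (Icc a b) = ENNReal.ofReal (δ * (b - a)) := by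
  rw [Real.volume_Icc, ENNReal.ofReal_mul hδ]

lemma HasDensity.ofReal_le_volume_inter {δ m a b : ℝ} {Ω W : Set ℝ}
    (h : HasDensity δ Ω (Icc a b)) (hδ : 0 ≤ δ) (hW : Icc a b ⊆ W) (hm : m ≤ δ * (b - a)) :
    ENNReal.ofReal m ≤ volume (Ω ∩ W) :=
  calc ENNReal.ofReal m ≤ ENNReal.ofReal (δ * (b - a)) := ENNReal.ofReal_le_ofReal hm
    _ = ENNReal.ofReal δ * volume (Icc a b) := (ofReal_mul_volume_Icc hδ a b).symm
    _ ≤ volume (Ω ∩ Icc a b) := h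
    _ ≤ volume (Ω ∩ W) := measure_mono (inter_subset_inter_right _ hW)

lemma hasDensity_Icc_of_ofReal_le_volume_inter {δ m a b : ℝ} {Ω W : Set ℝ}
    (h : ENNReal.ofReal m ≤ volume (Ω ∩ W)) (hδ : 0 ≤ δ) (hW : W ⊆ Icc a b)
    (hm : δ * (b - a) ≤ m) : HasDensity δ Ω (Icc a b) :=
  calc ENNReal.ofReal δ * volume (Icc a b) = ENNReal.ofReal (δ * (b - a)) :=
        ofReal_mul_volume_Icc hδ a b
    _ ≤ ENNReal.ofReal m := ENNReal.ofReal_le_ofReal hm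
    _ ≤ volume (Ω ∩ W) := h
    _ ≤ volume (Ω ∩ Icc a b) := measure_mono (inter_subset_inter_right _ hW)

lemma seqInterval_neg (L : ℝ) (x : ℕ → ℝ) (n : ℤ) :
    seqInterval L x (-n) = -seqInterval L x n := by
  rcases lt_trichotomy n 0 with hn | rfl | hn
  · rw [seqInterval, seqInterval, if_neg (by omega), if_pos (by omega), if_neg (by omega),
      if_neg (by omega), Set.neg_Icc, neg_neg, neg_neg]
    congr 2 <;> omega
  · simp [seqInterval, Set.neg_Icc]
  · rw [seqInterval, seqInterval, if_neg (by omega), if_neg (by omega), if_neg (by omega),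
      if_pos hn, Set.neg_Icc]
    congr 3 <;> omega

lemma seqInterval_natCast {L : ℝ} {x : ℕ → ℝ} {n : ℕ} (hn : 1 ≤ n) :
    seqInterval L x n = Icc (x n) (x (n + 1)) := by
  rw [seqInterval, if_neg (by omega), if_pos (by omega), Int.toNat_natCast]

structure IsMeshSeq (s L : ℝ) (x : ℕ → ℝ) : Prop where
  zero : x 0 = 0
  one : x 1 = L
  succ : ∀ n : ℕ, 1 ≤ n → x (n + 1) = x n + L * (x n) ^ (-s)

noncomputable def meshSeq (s L : ℝ) : ℕ → ℝ
  | 0 => 0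
  | 1 => L
  | n + 2 => meshSeq s L (n + 1) + L * meshSeq s L (n + 1) ^ (-s)

lemma isMeshSeq_meshSeq (s L : ℝ) : IsMeshSeq s L (meshSeq s L) where
  zero := rfl
  one := rfl
  succ n hn := by obtain ⟨m, rfl⟩ := Nat.exists_eq_add_of_le' hn; rfl

/-- Once `xₙ ≥ L`, `⟨xₙ⟩ ≤ (1 + L⁻¹) xₙ`, so the steps `L xₙ^{-s}` are at most
`meshBound s L * ⟨xₙ⟩^{-s}`; this also covers the first step `x₁ - x₀ = L`. -/
noncomputable def meshBound (s L : ℝ) : ℝ := L * (1 + L⁻¹) ^ s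

lemma le_meshBound {s L : ℝ} (hs : 0 ≤ s) (hL : 0 < L) : L ≤ meshBound s L :=
  le_mul_of_one_le_right hL.le
    (Real.one_le_rpow (le_add_of_nonneg_right (inv_nonneg.2 hL.le)) hs)

namespace IsMeshSeq

variable {s L : ℝ} {x : ℕ → ℝ}

lemma le_of_one_le (hx : IsMeshSeq s L x) (hL : 0 < L) {n : ℕ} (hn : 1 ≤ n) : L ≤ x n := by
  induction n, hn using Nat.le_induction with
  | base => exact hx.one.ge
  | succ n hn ih =>
    rw [hx.succ n hn]
    have := Real.rpow_pos_of_pos (hL.trans_le ih) (-s)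
    nlinarith

lemma sub_eq (hx : IsMeshSeq s L x) {n : ℕ} (hn : 1 ≤ n) : x (n + 1) - x n = L * x n ^ (-s) := by
  rw [hx.succ n hn, add_sub_cancel_left]

lemma le_sub (hx : IsMeshSeq s L x) (hs : 0 ≤ s) (hL : 0 < L) {n : ℕ} (hn : 1 ≤ n) :
    L * jbracket (x n) ^ (-s) ≤ x (n + 1) - x n := by
  have hxn := hL.trans_le (hx.le_of_one_le hL hn)
  rw [hx.sub_eq hn]
  exact mul_le_mul_of_nonneg_left (Real.rpow_le_rpow_of_nonpos hxn
    ((le_abs_self _).trans (abs_le_jbracket _)) (neg_nonpos.2 hs)) hL.le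

lemma sub_le (hx : IsMeshSeq s L x) (hs : 0 ≤ s) (hL : 0 < L) (n : ℕ) :
    x (n + 1) - x n ≤ meshBound s L * jbracket (x n) ^ (-s) := by
  rcases Nat.eq_zero_or_pos n with rfl | hn
  · simpa [hx.zero, hx.one] using le_meshBound hs hL
  have hxn := hx.le_of_one_le hL hn
  rw [hx.sub_eq hn, meshBound, mul_assoc]
  gcongr
  exact rpow_neg_le_mul_rpow_neg hs (hL.le.trans hxn) (jbracket_pos _) (by positivity)
    (jbracket_le_mul_self hL hxn)

lemma sub_le_meshBound (hx : IsMeshSeq s L x) (hs : 0 ≤ s) (hL : 0 < L) (n : ℕ) :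
    x (n + 1) - x n ≤ meshBound s L :=
  (hx.sub_le hs hL n).trans (mul_le_of_le_one_right (hL.le.trans (le_meshBound hs hL))
    (jbracket_rpow_neg_le_one hs _))

lemma exists_lt (hx : IsMeshSeq s L x) (hs : 0 ≤ s) (hL : 0 < L) (p : ℝ) : ∃ n, p < x n := by
  by_contra! hbdd
  have hp : 0 < p := hL.trans_le (hx.one ▸ hbdd 1)
  set δ := L * p ^ (-s)
  have hgrowth : ∀ n : ℕ, L + n * δ ≤ x (n + 1) := by
    intro n
    induction n with
    | zero => simp [hx.one]
    | succ n ih =>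
      have hxn := hL.trans_le (hx.le_of_one_le hL n.succ_pos)
      have hδ : δ ≤ L * x (n + 1) ^ (-s) := mul_le_mul_of_nonneg_left
        (Real.rpow_le_rpow_of_nonpos hxn (hbdd _) (neg_nonpos.2 hs)) hL.le
      rw [hx.succ (n + 1) n.succ_pos]
      push_cast
      linarith
  obtain ⟨n, hn⟩ := exists_nat_gt (p / δ)
  have := hgrowth n
  have := (div_lt_iff₀ (by positivity : 0 < δ)).1 hn
  linarith [hbdd (n + 1)]

lemma exists_mem_Icc (hx : IsMeshSeq s L x) (hs : 0 ≤ s) (hL : 0 < L) {p : ℝ} (hp : 0 ≤ p) :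
    ∃ k, x k ≤ p ∧ p ≤ x (k + 1) := by
  classical
  have hex := hx.exists_lt hs hL p
  obtain ⟨k, hk⟩ : ∃ k, Nat.find hex = k + 1 := Nat.exists_eq_succ_of_ne_zero fun h => by
    have := Nat.find_spec hex
    rw [h, hx.zero] at this
    linarith
  exact ⟨k, not_lt.1 (Nat.find_min hex (by omega)), hk ▸ (Nat.find_spec hex).le⟩

end IsMeshSeq

lemma IsMeshSeq.hasDensity_Icc_of_thickAt {s τ γ L c : ℝ} {x : ℕ → ℝ} {Ω : Set ℝ}
    (hx : IsMeshSeq s (2 * L) x) (hs : 0 ≤ s) (hτ : 0 ≤ τ) (hγ : γ ∈ Ioo (0 : ℝ) 1)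
    (hL : 0 < L) (hc₀ : 0 ≤ c) (hc₁ : c ≤ 1)
    (hc : c * (meshBound s (2 * L) * (1 + meshBound s (2 * L)) ^ s) ≤ L)
    {n : ℕ} (hn : 1 ≤ n) (hΩ : ThickAt s τ γ L Ω ((x n + x (n + 1)) / 2)) :
    HasDensity ((c * γ ^ (1 + meshBound s (2 * L)) ^ τ) ^ jbracket (x n) ^ τ) Ω
      (Icc (x n) (x (n + 1))) := by
  have hL₂ : 0 < 2 * L := by positivity
  set B := meshBound s (2 * L)
  have hB₀ : 0 < B := hL₂.trans_le (le_meshBound hs hL₂)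
  have ha : 0 < x n := hL₂.trans_le (hx.le_of_one_le hL₂ hn)
  have hba : x (n + 1) - x n = 2 * L * x n ^ (-s) := hx.sub_eq hn
  have hstep : 0 < L * x n ^ (-s) := mul_pos hL (Real.rpow_pos_of_pos ha _)
  set y := (x n + x (n + 1)) / 2 with hy
  have hy₁ : y - x n = L * x n ^ (-s) := by rw [hy]; linarith
  have hy₂ : x (n + 1) - y = L * x n ^ (-s) := by rw [hy]; linarith
  have hya : |y - x n| ≤ B := by
    rw [abs_of_pos (hy₁ ▸ hstep)]
    linarith [hx.sub_le_meshBound hs hL₂ n]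
  refine hasDensity_Icc_of_ofReal_le_volume_inter hΩ
    (Real.rpow_nonneg (mul_nonneg hc₀ (Real.rpow_nonneg hγ.1.le _)) _) ?_ ?_
  · have hρ : jbracket y ^ (-s) ≤ x n ^ (-s) :=
      Real.rpow_le_rpow_of_nonpos ha ((le_abs.2 (Or.inl (by linarith))).trans
        (abs_le_jbracket y)) (neg_nonpos.2 hs)
    have : L * jbracket y ^ (-s) ≤ L * x n ^ (-s) := mul_le_mul_of_nonneg_left hρ hL.le
    exact Icc_subset_Icc (by linarith) (by linarith)
  · refine weight_mul_le hγ.1 hγ.2.le hτ hc₀ hc₁ (by linarith)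
      (jbracket_le_mul_of_abs_sub_le hya) (by linarith) ?_
    have hρ := jbracket_rpow_neg_le_mul (D := B) hs (x := x n) (y := y) (by rwa [abs_sub_comm])
    have hρ_pos := jbracket_rpow_pos y (-s)
    calc c * (x (n + 1) - x n) ≤ c * (B * (1 + B) ^ s) * jbracket y ^ (-s) := by
          rw [mul_assoc c, mul_assoc B]
          gcongr
          exact (hx.sub_le hs hL₂ n).trans (mul_le_mul_of_nonneg_left hρ hB₀.le)
      _ ≤ L * jbracket y ^ (-s) := mul_le_mul_of_nonneg_right hc hρ_pos.le
      _ ≤ 2 * L * jbracket y ^ (-s) := by nlinarith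

theorem exists_hasDensity_of_thickAt {s τ γ L : ℝ} {x : ℕ → ℝ} (hs : 0 ≤ s) (hτ : 0 ≤ τ)
    (hγ : γ ∈ Ioo (0 : ℝ) 1) (hL : 0 < L) (hx : IsMeshSeq s (2 * L) x) :
    ∃ γ' ∈ Ioo (0 : ℝ) 1, ∀ Ω : Set ℝ, (∀ y, ThickAt s τ γ L Ω y) →
      ∀ n : ℕ, HasDensity (γ' ^ jbracket (x n) ^ τ) Ω (seqInterval (2 * L) x n) := by
  set B := meshBound s (2 * L)
  have hB : 2 * L ≤ B := le_meshBound hs (by positivity)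
  have hB₁ : 2 * L ≤ B * (1 + B) ^ s :=
    hB.trans (le_mul_of_one_le_right (by linarith) (Real.one_le_rpow (by linarith) hs))
  set c := L / (B * (1 + B) ^ s)
  have hc₀ : 0 < c := div_pos hL (by linarith)
  have hcB : c * (B * (1 + B) ^ s) = L := div_mul_cancel₀ _ (by linarith)
  have hc : c ≤ 1 / 2 := by nlinarith
  have hγ' := mul_rpow_mem_Ioo (τ := τ) hγ hc₀ (by linarith) (by linarith : 0 < 1 + B)
  refine ⟨c * γ ^ (1 + B) ^ τ, hγ', fun Ω hΩ n => ?_⟩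
  rcases Nat.eq_zero_or_pos n with rfl | hn
  · rw [Nat.cast_zero, seqInterval, if_pos rfl]
    refine hasDensity_Icc_of_ofReal_le_volume_inter (hΩ 0) (Real.rpow_nonneg hγ'.1.le _) ?_ ?_
    · simp only [jbracket_zero, Real.one_rpow, mul_one, zero_sub, zero_add]
      exact Icc_subset_Icc (by linarith) (by linarith)
    · rw [hx.zero]
      refine weight_mul_le hγ.1 hγ.2.le hτ hc₀.le (by linarith) (by linarith) ?_ (by linarith) ?_
      · exact le_mul_of_one_le_left (jbracket_pos 0).le (by linarith)
      · simp only [jbracket_zero, Real.one_rpow, mul_one]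
        nlinarith
  rw [seqInterval_natCast hn]
  exact hx.hasDensity_Icc_of_thickAt hs hτ hγ hL hc₀.le (by linarith) hcB.le hn (hΩ _)

lemma IsMeshSeq.thickAt_of_hasDensity_Icc {s τ γ' L' L c y : ℝ} {x : ℕ → ℝ} {Ω : Set ℝ}
    (hx : IsMeshSeq s L' x) (hs : 0 ≤ s) (hτ : 0 ≤ τ) (hγ' : γ' ∈ Ioo (0 : ℝ) 1) (hL' : 0 < L')
    (hL : 2 * meshBound s L' * (1 + meshBound s L') ^ s ≤ L) (hc₀ : 0 ≤ c) (hc₁ : c ≤ 1)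
    (hc : c * (2 * L * (1 + meshBound s L') ^ s) ≤ L') {k : ℕ} (hk₀ : x k ≤ y)
    (hk₁ : y ≤ x (k + 1))
    (hΩ : HasDensity (γ' ^ jbracket (x (k + 1)) ^ τ) Ω (Icc (x (k + 1)) (x (k + 2)))) :
    ThickAt s τ (c * γ' ^ (1 + meshBound s L') ^ τ) L Ω y := by
  set B := meshBound s L'
  have hB₀ : 0 < B := hL'.trans_le (le_meshBound hs hL')
  have hstep := hx.sub_le_meshBound hs hL' k
  have hρ₀ : jbracket (x k) ^ (-s) ≤ (1 + B) ^ s * jbracket y ^ (-s) :=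
    jbracket_rpow_neg_le_mul hs (by rw [abs_sub_comm, abs_of_nonneg (by linarith)]; linarith)
  have hρ₁ : jbracket (x (k + 1)) ^ (-s) ≤ (1 + B) ^ s * jbracket y ^ (-s) :=
    jbracket_rpow_neg_le_mul hs (by rw [abs_of_nonneg (by linarith)]; linarith)
  have hρy : jbracket y ^ (-s) ≤ (1 + B) ^ s * jbracket (x (k + 1)) ^ (-s) :=
    jbracket_rpow_neg_le_mul hs (by rw [abs_sub_comm, abs_of_nonneg (by linarith)]; linarith)
  have hρ_pos := jbracket_rpow_pos y (-s)
  have hL₀ : 0 < L :=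
    (mul_pos (mul_pos two_pos hB₀) (Real.rpow_pos_of_pos (by linarith) s)).trans_le hL
  refine hΩ.ofReal_le_volume_inter (Real.rpow_nonneg hγ'.1.le _) ?_ ?_
  · have hnext : x (k + 2) - y ≤ L * jbracket y ^ (-s) := by
      have h₁ := hx.sub_le hs hL' (k + 1)
      have h₀ := hx.sub_le hs hL' k
      calc x (k + 2) - y ≤ (x (k + 1 + 1) - x (k + 1)) + (x (k + 1) - x k) := by linarith
        _ ≤ B * ((1 + B) ^ s * jbracket y ^ (-s)) + B * ((1 + B) ^ s * jbracket y ^ (-s)) :=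
            add_le_add (h₁.trans (mul_le_mul_of_nonneg_left hρ₁ hB₀.le))
              (h₀.trans (mul_le_mul_of_nonneg_left hρ₀ hB₀.le))
        _ = 2 * B * (1 + B) ^ s * jbracket y ^ (-s) := by ring
        _ ≤ L * jbracket y ^ (-s) := mul_le_mul_of_nonneg_right hL hρ_pos.le
    have : 0 ≤ L * jbracket y ^ (-s) := mul_nonneg hL₀.le hρ_pos.le
    exact Icc_subset_Icc (by linarith) (by linarith)
  · refine weight_mul_le hγ'.1 hγ'.2.le hτ hc₀ hc₁ (by linarith)
      (jbracket_le_mul_of_abs_sub_le (by rw [abs_of_nonneg (by linarith)]; linarith))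
      (by positivity) ?_
    calc c * (2 * L * jbracket y ^ (-s))
        ≤ c * (2 * L * (1 + B) ^ s) * jbracket (x (k + 1)) ^ (-s) := by
          rw [mul_assoc c, mul_assoc (2 * L)]
          exact mul_le_mul_of_nonneg_left (mul_le_mul_of_nonneg_left hρy (by linarith)) hc₀
      _ ≤ L' * jbracket (x (k + 1)) ^ (-s) :=
          mul_le_mul_of_nonneg_right hc (jbracket_rpow_pos _ _).le
      _ ≤ x (k + 2) - x (k + 1) := hx.le_sub hs hL' k.succ_pos

theorem exists_thickAt_of_hasDensity {s τ γ' L' : ℝ} {x : ℕ → ℝ} (hs : 0 ≤ s) (hτ : 0 ≤ τ)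
    (hγ' : γ' ∈ Ioo (0 : ℝ) 1) (hL' : 0 < L') (hx : IsMeshSeq s L' x) :
    ∃ γ ∈ Ioo (0 : ℝ) 1, ∃ L, 0 < L ∧ ∀ Ω : Set ℝ,
      (∀ n : ℤ, HasDensity (γ' ^ jbracket (x n.natAbs) ^ τ) Ω (seqInterval L' x n)) →
      ∀ y, 0 ≤ y → ThickAt s τ γ L Ω y := by
  set B := meshBound s L'
  have hB : L' ≤ B := le_meshBound hs hL'
  have hBs : 1 ≤ (1 + B) ^ s := Real.one_le_rpow (by linarith) hs
  set L := 2 * B * (1 + B) ^ s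
  have hBL : B ≤ 2 * L * (1 + B) ^ s := by
    have : 2 * B ≤ L := le_mul_of_one_le_right (by linarith) hBs
    nlinarith
  set c := L' / (2 * L * (1 + B) ^ s)
  have hc₀ : 0 < c := div_pos hL' (by linarith)
  have hcL : c * (2 * L * (1 + B) ^ s) = L' := div_mul_cancel₀ _ (by linarith)
  have hc₁ : c ≤ 1 := (div_le_one (by linarith)).2 (by linarith)
  refine ⟨c * γ' ^ (1 + B) ^ τ, mul_rpow_mem_Ioo hγ' hc₀ hc₁ (by linarith), L,
    by nlinarith, fun Ω hΩ y hy => ?_⟩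
  obtain ⟨k, hk₀, hk₁⟩ := hx.exists_mem_Icc hs hL' hy
  have hdense := hΩ (k + 1 : ℕ)
  rw [seqInterval_natCast k.succ_pos, Int.natAbs_natCast] at hdense
  exact hx.thickAt_of_hasDensity_Icc hs hτ hγ' hL' le_rfl hc₀.le hc₁ hcL.le hk₀ hk₁ hdense

theorem stmt9_general (s τ : ℝ) (hs : 0 ≤ s) (hτ : 0 ≤ τ) (Ω : Set ℝ) :
    (∃ γ ∈ Ioo (0 : ℝ) 1, ∃ L : ℝ, 0 < L ∧ ∀ x : ℝ,
        ENNReal.ofReal (γ ^ (jbracket x ^ τ) * (2 * L * jbracket x ^ (-s))) ≤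
          volume (Ω ∩ Icc (x - L * jbracket x ^ (-s)) (x + L * jbracket x ^ (-s))))
    ↔
    (∃ γ' ∈ Ioo (0 : ℝ) 1, ∃ L' : ℝ, 0 < L' ∧ ∃ x : ℕ → ℝ,
        x 0 = 0 ∧ x 1 = L' ∧ (∀ n : ℕ, 1 ≤ n → x (n + 1) = x n + L' * (x n) ^ (-s)) ∧
        ∀ n : ℤ,
          ENNReal.ofReal (γ' ^ (jbracket (x n.natAbs) ^ τ)) * volume (seqInterval L' x n) ≤
            volume (Ω ∩ seqInterval L' x n)) := by
  constructor
  · rintro ⟨γ, hγ, L, hL, hthick⟩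
    have hx := isMeshSeq_meshSeq s (2 * L)
    obtain ⟨γ', hγ', hdense⟩ := exists_hasDensity_of_thickAt hs hτ hγ hL hx
    have hthick_neg (y : ℝ) : ThickAt s τ γ L (-Ω) y := by
      rw [← neg_neg y, thickAt_neg]
      exact hthick _
    refine ⟨γ', hγ', 2 * L, by positivity, _, hx.zero, hx.one, hx.succ, fun n => ?_⟩
    obtain ⟨m, rfl | rfl⟩ := Int.eq_nat_or_neg n
    · exact hdense Ω hthick m
    · change HasDensity _ Ω _
      rw [seqInterval_neg, Int.natAbs_neg, hasDensity_neg]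
      exact hdense (-Ω) hthick_neg m
  · rintro ⟨γ', hγ', L', hL', x, hx₀, hx₁, hrec, hdense⟩
    obtain ⟨γ, hγ, L, hL, hthick⟩ :=
      exists_thickAt_of_hasDensity hs hτ hγ' hL' (⟨hx₀, hx₁, hrec⟩ : IsMeshSeq s L' x)
    have hdense_neg (n : ℤ) :
        HasDensity (γ' ^ jbracket (x n.natAbs) ^ τ) (-Ω) (seqInterval L' x n) := by
      rw [← hasDensity_neg, ← seqInterval_neg, ← Int.natAbs_neg]
      exact hdense (-n)
    refine ⟨γ, hγ, L, hL, fun y => ?_⟩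
    rcases le_total 0 y with hy | hy
    · exact hthick Ω hdense y hy
    · change ThickAt s τ γ L Ω y
      rw [← thickAt_neg]
      exact hthick (-Ω) hdense_neg (-y) (neg_nonneg.2 hy)

/-- A measurable `Ω ⊆ ℝ` is thick of type `(ρ_s, τ)` (pointwise density
condition in windows `[x - L⟨x⟩^{-s}, x + L⟨x⟩^{-s}]`) iff the density condition holds on the
fixed decomposition of `ℝ` into the intervals generated by the recurrence
`x₀ = 0, x₁ = L', x_{n+1} = xₙ + L'·xₙ^{-s}`. -/
theorem stmt9 (s τ : ℝ) (hs : 0 ≤ s) (hτ : 0 ≤ τ) (Ω : Set ℝ) (hΩ : MeasurableSet Ω) :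
    (∃ γ ∈ Ioo (0 : ℝ) 1, ∃ L : ℝ, 0 < L ∧ ∀ x : ℝ,
        ENNReal.ofReal (γ ^ (jbracket x ^ τ) * (2 * L * jbracket x ^ (-s))) ≤
          volume (Ω ∩ Icc (x - L * jbracket x ^ (-s)) (x + L * jbracket x ^ (-s))))
    ↔
    (∃ γ' ∈ Ioo (0 : ℝ) 1, ∃ L' : ℝ, 0 < L' ∧ ∃ x : ℕ → ℝ,
        x 0 = 0 ∧ x 1 = L' ∧ (∀ n : ℕ, 1 ≤ n → x (n + 1) = x n + L' * (x n) ^ (-s)) ∧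
        ∀ n : ℤ,
          ENNReal.ofReal (γ' ^ (jbracket (x n.natAbs) ^ τ)) * volume (seqInterval L' x n) ≤
            volume (Ω ∩ seqInterval L' x n)) :=
  stmt9_general s τ hs hτ Ω
end
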